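/- arXiv:1311.3749 — 2 statements merged into one kernel-verified Lean document; each statement's English description precedes it below -/
import Mathlib

section
/- In the functional-router model with initial condition χ^{(0)} = μ^{(0)}, for any w ∈ V and T ≥ 0: χ^{(T)}_w − μ^{(T)}_w = Σ_{t=0}^{T−1} Σ_{u∈V} Σ_{v∈N(u)} (Z^{(t)}_{v,u} − χ^{(t)}_v P_{v,u})(P^{T−t−1}_{u,w} − π_w). -/
open Finset Matrix

/-! The actual configuration evolves as `χ_{t+1} = χ_t P + e_t`, where `e_t u = Σ_v (Z_{v,u} − χ_v P_{v,u})`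
is the rounding error of step `t`. Unrolling this recursion (variation of constants) gives
`χ_T − χ_0 P^T = Σ_{t<T} e_t P^{T−t−1}`. Each `e_t` has total mass zero, because tokens are conserved and
`P` is stochastic, so subtracting the constant `π_w` from the column `P^{T−t−1}_{·,w}` does not change
`(e_t P^{T−t−1})_w`. -/

theorem sub_vecMul_pow_eq_sum {R V : Type*} [Ring R] [Fintype V] [DecidableEq V]
    (P : Matrix V V R) (x : ℕ → V → R) (T : ℕ) :
    x T - x 0 ᵥ* P ^ T = ∑ t ∈ range T, (x (t + 1) - x t ᵥ* P) ᵥ* P ^ (T - t - 1) := by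
  have hstep : ∀ t ∈ range T, x (t + 1) ᵥ* P ^ (T - (t + 1)) - x t ᵥ* P ^ (T - t) =
      (x (t + 1) - x t ᵥ* P) ᵥ* P ^ (T - t - 1) := by
    intro t ht
    have hT : T - t = T - (t + 1) + 1 := by have := mem_range.mp ht; omega
    rw [hT, pow_succ', ← vecMul_vecMul, sub_vecMul, Nat.add_sub_cancel]
  rw [← sum_congr rfl hstep, sum_range_sub (fun t => x t ᵥ* P ^ (T - t))]
  simp

theorem sum_mul_sub_const_of_sum_eq_zero {R V : Type*} [Ring R] [Fintype V]
    {d : V → R} (hd : ∑ u, d u = 0) (f : V → R) (c : R) :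
    ∑ u, d u * (f u - c) = ∑ u, d u * f u := by
  simp [mul_sub, sum_sub_distrib, ← sum_mul, hd]

theorem sum_sum_sub_mul_eq_zero_of_rowSums {R V : Type*} [Ring R] [Fintype V]
    (P : Matrix V V R) (hP1 : ∀ u, ∑ v, P u v = 1) (x : V → R) (Y : V → V → R)
    (hY : ∀ v, ∑ u, Y v u = x v) :
    ∑ u, ∑ v, (Y v u - x v * P v u) = 0 := by
  rw [sum_comm]
  refine sum_eq_zero fun v _ => ?_
  rw [sum_sub_distrib, ← mul_sum, hP1, hY, mul_one, sub_self]

theorem stmt_7_general {V : Type*} [Fintype V] [DecidableEq V]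
    (P : Matrix V V ℝ) (π : V → ℝ)
    (hP0 : ∀ u v, 0 ≤ P u v) (hP1 : ∀ u, ∑ v, P u v = 1)
    (χ : ℕ → V → ℕ) (Z : ℕ → V → V → ℕ)
    (hupd : ∀ t u, χ (t + 1) u = ∑ v, Z t v u)
    (hout : ∀ t v, ∑ u, Z t v u = χ t v)
    (hsupp : ∀ t v u, P v u = 0 → Z t v u = 0) :
    ∀ (w : V) (T : ℕ),
      (χ T w : ℝ) - ((fun v => (χ 0 v : ℝ)) ᵥ* P ^ T) w =
        ∑ t ∈ Finset.range T, ∑ u, ∑ v ∈ Finset.univ.filter (fun v => 0 < P v u),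
          ((Z t v u : ℝ) - (χ t v : ℝ) * P v u) * ((P ^ (T - t - 1)) u w - π w) := by
  intro w T
  have hunroll := congrFun (sub_vecMul_pow_eq_sum P (fun t v => (χ t v : ℝ)) T) w
  rw [Pi.sub_apply] at hunroll
  rw [hunroll, Finset.sum_apply]
  refine sum_congr rfl fun t _ => ?_
  have herror : ∀ u, (χ (t + 1) u : ℝ) - ((fun v => (χ t v : ℝ)) ᵥ* P) u =
      ∑ v, ((Z t v u : ℝ) - χ t v * P v u) := by
    simp [hupd, vecMul, dotProduct, sum_sub_distrib]
  have hsupport : ∀ u, ∑ v ∈ univ.filter (fun v => 0 < P v u),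
      ((Z t v u : ℝ) - χ t v * P v u) * ((P ^ (T - t - 1)) u w - π w) =
      (∑ v, ((Z t v u : ℝ) - χ t v * P v u)) * ((P ^ (T - t - 1)) u w - π w) := by
    intro u
    rw [sum_mul]
    refine sum_filter_of_ne fun v _ hne => (hP0 v u).lt_of_ne' fun hzero => hne ?_
    simp [hzero, hsupp t v u hzero]
  have hmass := sum_sum_sub_mul_eq_zero_of_rowSums P hP1 (fun v => (χ t v : ℝ))
    (fun v u => (Z t v u : ℝ)) fun v => by exact_mod_cast hout t v
  simp only [hsupport, sum_mul_sub_const_of_sum_eq_zero hmass]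
  rw [vecMul, dotProduct]
  simp only [Pi.sub_apply, herror]

/-- Key lemma for the functional-router model: exact expression of the discrepancy
`χ^{(T)}_w − μ^{(T)}_w`. -/
theorem stmt_7 {V : Type*} [Fintype V] [DecidableEq V]
    (P : Matrix V V ℝ) (π : V → ℝ)
    (hP0 : ∀ u v, 0 ≤ P u v) (hP1 : ∀ u, ∑ v, P u v = 1)
    (hπ0 : ∀ v, 0 ≤ π v) (hπ1 : ∑ v, π v = 1)
    (hstat : π ᵥ* P = π)
    (hrev : ∀ u v, π u * P u v = π v * P v u)
    (χ : ℕ → V → ℕ) (Z : ℕ → V → V → ℕ)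
    (hupd : ∀ t u, χ (t + 1) u = ∑ v, Z t v u)
    (hout : ∀ t v, ∑ u, Z t v u = χ t v)
    (hsupp : ∀ t v u, P v u = 0 → Z t v u = 0) :
    ∀ (w : V) (T : ℕ),
      (χ T w : ℝ) - ((fun v => (χ 0 v : ℝ)) ᵥ* P ^ T) w =
        ∑ t ∈ Finset.range T, ∑ u, ∑ v ∈ Finset.univ.filter (fun v => 0 < P v u),
          ((Z t v u : ℝ) - (χ t v : ℝ) * P v u) * ((P ^ (T - t - 1)) u w - π w) :=
  stmt_7_general P π hP0 hP1 χ Z hupd hout hsupp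
end

section
/- For the van der Corput function ψ, for any z ∈ ℤ_{≥0}, any k ∈ ℤ_{≥0}, and any i ∈ {0,1,…,2^k−1}, the set Φ[z, z+2^k) = {ψ(j) : z ≤ j < z+2^k} contains exactly one element of the dyadic interval [i/2^k, (i+1)/2^k). -/
open Finset

/-- The van der Corput function `ψ`: binary digit reversal of the index.
(For `i ≥ 1` all binary digits of `i` have index `< i`, so summing over
`j < i` captures the full expansion; `ψ 0 = 0`.) -/
noncomputable def vdc (i : ℕ) : ℝ :=
  ∑ j ∈ Finset.range i, if i.testBit j then ((1 : ℝ) / 2) ^ (j + 1) else 0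

/-!
Write `bitRev k j` for the reversal of the `k` lowest binary digits of `j`. The recursion
`ψ(j) = (j mod 2 + ψ(⌊j/2⌋)) / 2` gives `⌊2^k ψ(j)⌋ = bitRev k j` by induction on `k`, so `ψ(j)`
lies in `[i/2^k, (i+1)/2^k)` exactly when `bitRev k j = i`. Since `bitRev k j` determines
`j mod 2^k`, it is injective on any `2^k` consecutive integers, and by counting it maps them
onto `{0, …, 2^k - 1}`.
-/

def bitRev : ℕ → ℕ → ℕ
  | 0, _ => 0
  | k + 1, j => j % 2 * 2 ^ k + bitRev k (j / 2)

lemma bitRev_lt (k j : ℕ) : bitRev k j < 2 ^ k := by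
  induction k generalizing j with
  | zero => simp [bitRev]
  | succ k ih =>
    have := ih (j / 2)
    have : j % 2 ≤ 1 := Nat.le_of_lt_succ (Nat.mod_lt j two_pos)
    rw [bitRev, pow_succ]
    nlinarith

lemma modEq_of_bitRev_eq {k a b : ℕ} (h : bitRev k a = bitRev k b) : a ≡ b [MOD 2 ^ k] := by
  induction k generalizing a b with
  | zero => exact Nat.modEq_one
  | succ k ih =>
    simp only [bitRev] at h
    have ha := bitRev_lt k (a / 2)
    have hb := bitRev_lt k (b / 2)
    have hpar : a % 2 = b % 2 := by
      rcases Nat.mod_two_eq_zero_or_one a with h₁ | h₁ <;>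
        rcases Nat.mod_two_eq_zero_or_one b with h₂ | h₂ <;>
        simp only [h₁, h₂] at h ⊢ <;> omega
    have hhalf : a / 2 ≡ b / 2 [MOD 2 ^ k] := ih (by rw [hpar] at h; omega)
    unfold Nat.ModEq at hhalf ⊢
    rw [pow_succ', Nat.mod_mul, Nat.mod_mul, hpar, hhalf]

lemma Nat.eq_of_modEq_of_mem_Ico {n z a b : ℕ} (h : a ≡ b [MOD n])
    (ha : a ∈ Ico z (z + n)) (hb : b ∈ Ico z (z + n)) : a = b := by
  rw [mem_Ico] at ha hb
  refine h.eq_of_abs_lt (abs_sub_lt_iff.mpr ⟨?_, ?_⟩) <;> omega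

lemma bitRev_injOn_Ico (k z : ℕ) : Set.InjOn (bitRev k) (Ico z (z + 2 ^ k)) :=
  fun _ ha _ hb h => Nat.eq_of_modEq_of_mem_Ico (modEq_of_bitRev_eq h) ha hb

lemma bitRev_surjOn_Ico (k z : ℕ) :
    Set.SurjOn (bitRev k) (Ico z (z + 2 ^ k)) (range (2 ^ k)) :=
  surjOn_of_injOn_of_card_le _ (fun j _ => mem_coe.mpr (mem_range.mpr (bitRev_lt k j)))
    (bitRev_injOn_Ico k z) (by simp)

lemma vdc_nonneg (j : ℕ) : 0 ≤ vdc j :=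
  sum_nonneg fun _ _ => by split <;> positivity

lemma vdc_eq_sum_range {j n : ℕ} (h : j ≤ n) :
    vdc j = ∑ b ∈ range n, if j.testBit b then ((1 : ℝ) / 2) ^ (b + 1) else 0 := by
  refine sum_subset (range_subset_range.mpr h) fun b _ hb => ?_
  have : j < 2 ^ b := j.lt_two_pow_self.trans_le
    (Nat.pow_le_pow_right two_pos (not_lt.mp (mem_range.not.mp hb)))
  simp [Nat.testBit_eq_false_of_lt this]

lemma vdc_eq_half (j : ℕ) : vdc j = ((j % 2 : ℕ) + vdc (j / 2)) / 2 := by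
  rw [vdc_eq_sum_range j.le_succ, sum_range_succ', vdc_eq_sum_range (Nat.div_le_self j 2),
    add_div, add_comm, sum_div]
  congr 1
  · rcases Nat.mod_two_eq_zero_or_one j with h | h <;> simp [Nat.testBit_zero, h]
  · refine sum_congr rfl fun b _ => ?_
    rw [Nat.testBit_succ]
    split <;> ring

lemma vdc_lt_one (j : ℕ) : vdc j < 1 := by
  induction j using Nat.strong_induction_on with
  | _ j ih =>
    rcases j.eq_zero_or_pos with rfl | hj
    · simp [vdc]
    · have h₁ := ih (j / 2) (Nat.div_lt_self hj one_lt_two)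
      have h₂ : ((j % 2 : ℕ) : ℝ) ≤ 1 := by exact_mod_cast Nat.le_of_lt_succ (Nat.mod_lt j two_pos)
      rw [vdc_eq_half]
      linarith

lemma floor_two_pow_mul_vdc (k j : ℕ) : ⌊2 ^ k * vdc j⌋₊ = bitRev k j := by
  induction k generalizing j with
  | zero => simpa [bitRev] using Nat.floor_eq_zero.mpr (vdc_lt_one j)
  | succ k ih =>
    have : 2 ^ (k + 1) * vdc j = 2 ^ k * vdc (j / 2) + ((j % 2 * 2 ^ k : ℕ) : ℝ) := by
      rw [vdc_eq_half]; push_cast; ring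
    rw [this, Nat.floor_add_natCast (by positivity [vdc_nonneg (j / 2)]), ih, bitRev, add_comm]

lemma mem_Ico_div_iff_floor_mul_eq {c x : ℝ} (hc : 0 < c) (hx : 0 ≤ x) (i : ℕ) :
    (i / c ≤ x ∧ x < (i + 1) / c) ↔ ⌊c * x⌋₊ = i := by
  rw [Nat.floor_eq_iff (by positivity), div_le_iff₀ hc, lt_div_iff₀ hc, mul_comm x]

lemma vdc_mem_Ico_iff_bitRev_eq (k j i : ℕ) :
    ((i : ℝ) / 2 ^ k ≤ vdc j ∧ vdc j < ((i : ℝ) + 1) / 2 ^ k) ↔ bitRev k j = i := by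
  rw [mem_Ico_div_iff_floor_mul_eq (by positivity) (vdc_nonneg j), floor_two_pow_mul_vdc]

/-- `Φ[z, z+2^k)` contains exactly one element of `[i/2^k, (i+1)/2^k)`. -/
theorem stmt_16 : ∀ z k i : ℕ, i < 2 ^ k →
    ∃! x : ℝ, (∃ j : ℕ, z ≤ j ∧ j < z + 2 ^ k ∧ vdc j = x) ∧
      (i : ℝ) / 2 ^ k ≤ x ∧ x < ((i : ℝ) + 1) / 2 ^ k := by
  intro z k i hi
  obtain ⟨j, hj, hji⟩ := bitRev_surjOn_Ico k z (mem_range.mpr hi)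
  refine ⟨vdc j, ⟨⟨j, (mem_Ico.mp hj).1, (mem_Ico.mp hj).2, rfl⟩,
    (vdc_mem_Ico_iff_bitRev_eq k j i).mpr hji⟩, ?_⟩
  rintro _ ⟨⟨j', hzj', hj'z, rfl⟩, hj'⟩
  have hj'i := (vdc_mem_Ico_iff_bitRev_eq k j' i).mp hj'
  rw [bitRev_injOn_Ico k z (mem_Ico.mpr ⟨hzj', hj'z⟩) hj (hj'i.trans hji.symm)]
end
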